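/- Let G be a tournament. Then #T_4 + #X_4 equals the sum over all edges (u,v) of G of d⁺(u,v) · d⁻(u,v). -/

import Mathlib

/-!
Both sides count *diamonds*: maps `f : Fin 4 → V` with `f 0 → f 1 → f 2 → f 3`, `f 0 → f 2`
and `f 1 → f 3`. Choosing the middle edge `(f 1, f 2)`, then `f 3` among its common
out-neighbours and `f 0` among its common in-neighbours gives the right-hand side. A diamond is
exactly a labelled copy of `T₄` or of `X₄`, according to the orientation of the remaining pair
`{f 0, f 3}`; since `T₄` and `X₄` have no nontrivial automorphisms, labelled copies are in
bijection with copies.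
-/

/-- A tournament: a directed graph in which, for every pair of distinct vertices,
exactly one of the two possible directed edges is present, and there are no loops. -/
def IsTournament {V : Type*} (r : V → V → Prop) : Prop :=
  (∀ v, ¬ r v v) ∧ ∀ u v : V, u ≠ v → (r u v ↔ ¬ r v u)

/-- The number of copies of the tournament `t` (on vertex type `W`) in the tournament `r`
(on vertex type `V`): the number of vertex subsets of `V` whose induced subtournament is
isomorphic to `t`. -/
noncomputable def CopyCount {V W : Type*} (r : V → V → Prop) (t : W → W → Prop) : ℕ :=
  Nat.card {s : Set V // ∃ e : W ≃ s, ∀ i j : W, t i j ↔ r (e i) (e j)}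

/-- `X₄`, the (unique up to isomorphism) strongly connected tournament on four vertices:
`0 → 1 → 2 → 3 → 0` together with `0 → 2` and `1 → 3`. -/
def X4rel : Fin 4 → Fin 4 → Prop := fun i j =>
  (i = 0 ∧ j = 1) ∨ (i = 1 ∧ j = 2) ∨ (i = 2 ∧ j = 3) ∨ (i = 3 ∧ j = 0) ∨
  (i = 0 ∧ j = 2) ∨ (i = 1 ∧ j = 3)

namespace IsTournament

variable {V : Type*} {r : V → V → Prop}

theorem asymm (hr : IsTournament r) {a b : V} (h : r a b) : ¬ r b a := by
  by_cases hab : a = b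
  · exact (hr.1 a (hab ▸ h)).elim
  · exact (hr.2 a b hab).mp h

theorem ne_of_rel (hr : IsTournament r) {a b : V} (h : r a b) : a ≠ b :=
  fun hab => hr.1 b (hab ▸ h)

theorem rel_or_rel (hr : IsTournament r) {a b : V} (hab : a ≠ b) : r a b ∨ r b a := by
  by_cases h : r b a
  · exact Or.inr h
  · exact Or.inl ((hr.2 a b hab).mpr h)

theorem not_rel_iff (hr : IsTournament r) {a b : V} (hab : a ≠ b) : ¬ r a b ↔ r b a :=
  ⟨fun h => (hr.rel_or_rel hab).resolve_left h, hr.asymm⟩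

end IsTournament

theorem isTournament_lt {W : Type*} [LinearOrder W] : IsTournament (V := W) (· < ·) :=
  ⟨lt_irrefl, fun _ _ hab => ⟨fun h => h.not_gt, fun h => (not_lt.mp h).lt_of_ne hab⟩⟩

theorem isTournament_X4rel : IsTournament X4rel := by
  unfold IsTournament X4rel
  decide

section LabelledCopy

variable {V W : Type*} {r : V → V → Prop} {t : W → W → Prop}

def IsLabelledCopy (t : W → W → Prop) (r : V → V → Prop) (f : W → V) : Prop :=
  ∀ i j, t i j ↔ r (f i) (f j)

theorem IsLabelledCopy.injective (ht : IsTournament t) (hr : IsTournament r) {f : W → V}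
    (hf : IsLabelledCopy t r f) : Function.Injective f := by
  intro i j hij
  by_contra hne
  rcases ht.rel_or_rel hne with h | h
  · exact hr.1 (f i) (by simpa [hij] using (hf i j).mp h)
  · exact hr.1 (f i) (by simpa [hij] using (hf j i).mp h)

theorem isLabelledCopy_of_lt [LinearOrder W] (ht : IsTournament t) (hr : IsTournament r)
    {f : W → V} (hf : Function.Injective f) (h : ∀ i j, i < j → (t i j ↔ r (f i) (f j))) :
    IsLabelledCopy t r f := by
  intro i j
  rcases lt_trichotomy i j with hij | rfl | hij
  · exact h i j hij
  · exact iff_of_false (ht.1 i) (hr.1 (f i))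
  · rw [← ht.not_rel_iff hij.ne, ← hr.not_rel_iff (hf.ne hij.ne), h j i hij]

theorem copyCount_eq_card_isLabelledCopy (ht : IsTournament t) (hr : IsTournament r)
    (hrigid : ∀ σ : W ≃ W, (∀ i j, t i j ↔ t (σ i) (σ j)) → σ = Equiv.refl W) :
    CopyCount r t = Nat.card {f : W → V // IsLabelledCopy t r f} := by
  symm
  refine Nat.card_congr (Equiv.ofBijective
    (fun f => ⟨Set.range f.1, Equiv.ofInjective f.1 (f.2.injective ht hr), fun i j => f.2 i j⟩)
    ⟨?_, ?_⟩)
  · rintro ⟨f, hf⟩ ⟨g, hg⟩ hfg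
    have hrange : Set.range f = Set.range g := congrArg Subtype.val hfg
    let σ : W ≃ W := (Equiv.ofInjective f (hf.injective ht hr)).trans
      ((Equiv.setCongr hrange).trans (Equiv.ofInjective g (hg.injective ht hr)).symm)
    have hgσ : ∀ i, g (σ i) = f i := fun i => by
      simp [σ, Equiv.apply_ofInjective_symm]
    have hσ : σ = Equiv.refl W := hrigid σ fun i j => by
      rw [hf, hg, hgσ, hgσ]
    ext i
    simpa [hσ] using (hgσ i).symm
  · rintro ⟨s, e, he⟩
    refine ⟨⟨fun i => e i, he⟩, Subtype.ext ?_⟩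
    ext v
    exact ⟨fun ⟨i, hi⟩ => hi ▸ (e i).2, fun hv => ⟨e.symm ⟨v, hv⟩, by simp⟩⟩

end LabelledCopy

section Diamond

variable {V : Type*} {r : V → V → Prop}

def diamond (i j : Fin 4) : Prop := i < j ∧ ¬ (i = 0 ∧ j = 3)

instance : DecidableRel diamond := fun _ _ => inferInstanceAs (Decidable (_ ∧ _))

theorem X4rel_of_diamond : ∀ i j, diamond i j → X4rel i j := by
  unfold X4rel
  decide

def IsDiamond (r : V → V → Prop) (f : Fin 4 → V) : Prop :=
  ∀ i j, diamond i j → r (f i) (f j)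

theorem isDiamond_iff {f : Fin 4 → V} : IsDiamond r f ↔
    r (f 0) (f 1) ∧ r (f 0) (f 2) ∧ r (f 1) (f 2) ∧ r (f 1) (f 3) ∧ r (f 2) (f 3) := by
  refine ⟨fun hf => ⟨hf 0 1 (by decide), hf 0 2 (by decide), hf 1 2 (by decide),
    hf 1 3 (by decide), hf 2 3 (by decide)⟩, fun hf i j hij => ?_⟩
  fin_cases i <;> fin_cases j <;> simp_all [diamond]

theorem IsDiamond.injective (hr : IsTournament r) {f : Fin 4 → V} (hf : IsDiamond r f) :
    Function.Injective f := by
  obtain ⟨h01, h02, h12, h13, h23⟩ := isDiamond_iff.mp hf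
  have h03 : f 0 ≠ f 3 := fun h => hr.asymm h02 (h ▸ h23)
  replace h01 := hr.ne_of_rel h01
  replace h02 := hr.ne_of_rel h02
  replace h12 := hr.ne_of_rel h12
  replace h13 := hr.ne_of_rel h13
  replace h23 := hr.ne_of_rel h23
  intro i j hij
  fin_cases i <;> fin_cases j <;> simp_all [eq_comm]

theorem isLabelledCopy_lt_iff (hr : IsTournament r) {f : Fin 4 → V} :
    IsLabelledCopy (· < ·) r f ↔ IsDiamond r f ∧ r (f 0) (f 3) := by
  refine ⟨fun hf => ⟨fun i j hij => (hf i j).mp hij.1, (hf 0 3).mp (by decide)⟩,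
    fun ⟨hf, h03⟩ => isLabelledCopy_of_lt isTournament_lt hr (hf.injective hr) ?_⟩
  intro i j hij
  refine iff_of_true hij ?_
  by_cases h : i = 0 ∧ j = 3
  · rwa [h.1, h.2]
  · exact hf i j ⟨hij, h⟩

theorem isLabelledCopy_X4rel_iff (hr : IsTournament r) {f : Fin 4 → V} :
    IsLabelledCopy X4rel r f ↔ IsDiamond r f ∧ ¬ r (f 0) (f 3) := by
  constructor
  · intro hf
    exact ⟨fun i j hij => (hf i j).mp (X4rel_of_diamond i j hij),
      fun h => hr.asymm h ((hf 3 0).mp (by unfold X4rel; decide))⟩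
  · rintro ⟨hf, h03⟩
    refine isLabelledCopy_of_lt isTournament_X4rel hr (hf.injective hr) fun i j hij => ?_
    by_cases h : i = 0 ∧ j = 3
    · obtain ⟨rfl, rfl⟩ := h
      exact iff_of_false (by unfold X4rel; decide) h03
    · exact iff_of_true (X4rel_of_diamond i j ⟨hij, h⟩) (hf i j ⟨hij, h⟩)

def isDiamondEquivSigma : {f : Fin 4 → V // IsDiamond r f} ≃
    Σ u v, PLift (r u v) × {w // r u w ∧ r v w} × {x // r x u ∧ r x v} where
  toFun f :=
    have hf := isDiamond_iff.mp f.2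
    ⟨f.1 1, f.1 2, ⟨hf.2.2.1⟩, ⟨f.1 3, hf.2.2.2⟩, ⟨f.1 0, hf.1, hf.2.1⟩⟩
  invFun := fun ⟨u, v, ⟨huv⟩, ⟨w, hw⟩, ⟨x, hx⟩⟩ =>
    ⟨![x, u, v, w], isDiamond_iff.mpr ⟨hx.1, hx.2, huv, hw.1, hw.2⟩⟩
  left_inv f := by
    ext i
    fin_cases i <;> rfl
  right_inv _ := rfl

theorem card_isDiamond [Fintype V] [DecidableRel r] :
    Nat.card {f : Fin 4 → V // IsDiamond r f} = ∑ u : V, ∑ v : V,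
      if r u v then Nat.card {w : V // r u w ∧ r v w} * Nat.card {w : V // r w u ∧ r w v}
      else 0 := by
  rw [Nat.card_congr isDiamondEquivSigma, Nat.card_sigma]
  refine Fintype.sum_congr _ _ fun u => ?_
  rw [Nat.card_sigma]
  refine Fintype.sum_congr _ _ fun v => ?_
  split_ifs with huv <;> simp [huv]

end Diamond

/-- In a tournament `G`, `#T₄ + #X₄ = ∑_{(u,v) ∈ E(G)} d⁺(u,v) · d⁻(u,v)`, where
`d⁺(u,v)` (resp. `d⁻(u,v)`) is the number of common out-neighbors (resp. in-neighbors)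
of `u` and `v`. -/
theorem stmt_14 {V : Type*} [Fintype V] (r : V → V → Prop) [DecidableRel r]
    (hr : IsTournament r) :
    CopyCount r (fun i j : Fin 4 => i < j) + CopyCount r X4rel =
      ∑ u : V, ∑ v : V,
        if r u v then
          Nat.card {w : V // r u w ∧ r v w} * Nat.card {w : V // r w u ∧ r w v}
        else 0 := by
  rw [copyCount_eq_card_isLabelledCopy isTournament_lt hr (by decide),
    copyCount_eq_card_isLabelledCopy isTournament_X4rel hr (by unfold X4rel; decide),
    ← card_isDiamond, ← Nat.card_sum]
  simp only [isLabelledCopy_lt_iff hr, isLabelledCopy_X4rel_iff hr]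
  exact Nat.card_congr <| (Equiv.sumCongr (Equiv.subtypeSubtypeEquivSubtypeInter _ _).symm
    (Equiv.subtypeSubtypeEquivSubtypeInter _ _).symm).trans (Equiv.sumCompl _)
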